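/- For each k ∈ ℕ, the map γ_{2k} : S_{2k} → S_{2k+1} defined on Coxeter generators by γ_{2k}(s_i) = s_i for 1 ≤ i ≤ k−1, γ_{2k}(s_k) = s_k s_{k+1} s_k, and γ_{2k}(s_i) = s_{i+1} for k+1 ≤ i ≤ 2k−1, is a well-defined injective group homomorphism which intertwines the automorphisms: θ_{2k+1} ∘ γ_{2k} = γ_{2k} ∘ θ_{2k}. -/

import Mathlib

/-!
Take `γ` to be the extension of permutations along `Fin.succAbove k : Fin (2k) ↪ Fin (2k+1)`, the
order embedding that skips the middle point `k`; then `γ` is an injective homomorphism fixing `k`,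
and `γ (swap a b) = swap (k.succAbove a) (k.succAbove b)` gives its values on the generators.
Any automorphism acting on the adjacent transpositions like `θ_m` is conjugation by the reversal
`i ↦ m - 1 - i`, since these transpositions generate. Because `k` is the centre of `Fin (2k+1)`,
`succAbove k` commutes with reversal, so `γ` sends the reversal of `Fin (2k)` to that of
`Fin (2k+1)` and hence intertwines the two conjugations.
-/

open Equiv

namespace Equiv.Perm

variable {α β : Type*}

theorem viaEmbedding_eq_of_forall {e : Perm α} {ι : α ↪ β} {f : Perm β}
    (h_range : ∀ a, f (ι a) = ι (e a)) (h_compl : ∀ b ∉ Set.range ι, f b = b) :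
    e.viaEmbedding ι = f := by
  ext b
  by_cases hb : b ∈ Set.range ι
  · obtain ⟨a, rfl⟩ := hb
    rw [viaEmbedding_apply, h_range]
  · rw [viaEmbedding_apply_of_notMem _ _ _ hb, h_compl b hb]

theorem viaEmbeddingHom_swap [DecidableEq α] [DecidableEq β] (ι : α ↪ β) (a b : α) :
    viaEmbeddingHom ι (swap a b) = swap (ι a) (ι b) :=
  viaEmbedding_eq_of_forall (fun x ↦ ι.swap_apply a b x) fun _ hc ↦
    swap_apply_of_ne_of_ne (fun h ↦ hc ⟨a, h.symm⟩) (fun h ↦ hc ⟨b, h.symm⟩)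

theorem fin_monoidHom_ext_adjacent_swap {M : Type*} [Monoid M] {m : ℕ}
    {f g : Perm (Fin m) →* M}
    (h : ∀ (j : ℕ) (hj : j + 1 < m),
      f (swap ⟨j, by omega⟩ ⟨j + 1, hj⟩) = g (swap ⟨j, by omega⟩ ⟨j + 1, hj⟩)) :
    f = g := by
  cases m with
  | zero => exact MonoidHom.ext fun σ ↦ by rw [Subsingleton.elim σ 1, map_one, map_one]
  | succ n =>
    refine MonoidHom.eq_of_eqOn_denseM (mclosure_swap_castSucc_succ n) ?_
    rintro _ ⟨i, rfl⟩
    exact h i (by omega)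

end Equiv.Perm

namespace Fin

theorem revPerm_viaEmbedding_succAboveEmb {n : ℕ} {p : Fin (n + 1)} (hp : p.rev = p) :
    revPerm.viaEmbedding p.succAboveEmb = revPerm :=
  Perm.viaEmbedding_eq_of_forall (fun i ↦ by simp [rev_succAbove, hp]) fun b hb ↦ by
    obtain rfl : b = p := by simpa using hb
    exact hp

theorem succAbove_mk_of_lt {n k i : ℕ} (hk : k < n + 1) (hi : i < n) (h : i < k) :
    (⟨k, hk⟩ : Fin (n + 1)).succAbove ⟨i, hi⟩ = ⟨i, by omega⟩ :=
  succAbove_of_castSucc_lt _ _ h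

theorem succAbove_mk_of_le {n k i : ℕ} (hk : k < n + 1) (hi : i < n) (h : k ≤ i) :
    (⟨k, hk⟩ : Fin (n + 1)).succAbove ⟨i, hi⟩ = ⟨i + 1, by omega⟩ :=
  succAbove_of_le_castSucc _ _ h

theorem conj_revPerm_swap_adjacent {m j : ℕ} (hj : j + 1 < m) :
    MulAut.conj revPerm (swap (⟨j, by omega⟩ : Fin m) ⟨j + 1, hj⟩) =
      swap ⟨m - 2 - j, by omega⟩ ⟨m - 1 - j, by omega⟩ := by
  rw [MulAut.conj_apply, ← swap_apply_apply, swap_comm]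
  congr 1 <;> ext <;> simp <;> omega

theorem eq_conj_revPerm_of_adjacent_swap {m : ℕ} {F : Type*}
    [FunLike F (Perm (Fin m)) (Perm (Fin m))] [MonoidHomClass F (Perm (Fin m)) (Perm (Fin m))]
    (θ : F)
    (hθ : ∀ (j : ℕ) (hj : j + 1 < m),
      θ (swap ⟨j, by omega⟩ ⟨j + 1, hj⟩) = swap ⟨m - 2 - j, by omega⟩ ⟨m - 1 - j, by omega⟩)
    (σ : Perm (Fin m)) : θ σ = revPerm * σ * revPerm⁻¹ :=
  DFunLike.congr_fun (Perm.fin_monoidHom_ext_adjacent_swap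
    (f := (θ : Perm (Fin m) →* Perm (Fin m))) (g := (MulAut.conj revPerm).toMonoidHom)
    fun j hj ↦ (hθ j hj).trans (conj_revPerm_swap_adjacent hj).symm) σ

end Fin

/-- For each `k ≥ 1` there is an injective group homomorphism `γ : S_{2k} → S_{2k+1}`
with `γ(s_i) = s_i` for `1 ≤ i ≤ k-1`, `γ(s_k) = s_k s_{k+1} s_k`, and
`γ(s_i) = s_{i+1}` for `k+1 ≤ i ≤ 2k-1` (Coxeter generators `s_i = (i, i+1)`,
0-indexed below), which intertwines the flip automorphisms:
`θ_{2k+1} ∘ γ = γ ∘ θ_{2k}`. -/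
theorem equivariant_embedding_even_into_odd (k : ℕ) (hk : 1 ≤ k) :
    ∃ γ : Equiv.Perm (Fin (2 * k)) →* Equiv.Perm (Fin (2 * k + 1)),
      Function.Injective γ ∧
      (∀ (i : ℕ) (h1 : 1 ≤ i) (h2 : i ≤ k - 1),
        γ (Equiv.swap (⟨i - 1, by omega⟩ : Fin (2 * k)) (⟨i, by omega⟩ : Fin (2 * k))) =
          Equiv.swap (⟨i - 1, by omega⟩ : Fin (2 * k + 1)) (⟨i, by omega⟩ : Fin (2 * k + 1))) ∧
      (γ (Equiv.swap (⟨k - 1, by omega⟩ : Fin (2 * k)) (⟨k, by omega⟩ : Fin (2 * k))) =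
        Equiv.swap (⟨k - 1, by omega⟩ : Fin (2 * k + 1)) (⟨k, by omega⟩ : Fin (2 * k + 1)) *
          Equiv.swap (⟨k, by omega⟩ : Fin (2 * k + 1)) (⟨k + 1, by omega⟩ : Fin (2 * k + 1)) *
          Equiv.swap (⟨k - 1, by omega⟩ : Fin (2 * k + 1)) (⟨k, by omega⟩ : Fin (2 * k + 1))) ∧
      (∀ (i : ℕ) (h1 : k + 1 ≤ i) (h2 : i ≤ 2 * k - 1),
        γ (Equiv.swap (⟨i - 1, by omega⟩ : Fin (2 * k)) (⟨i, by omega⟩ : Fin (2 * k))) =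
          Equiv.swap (⟨i, by omega⟩ : Fin (2 * k + 1)) (⟨i + 1, by omega⟩ : Fin (2 * k + 1))) ∧
      (∀ (θ₁ : Equiv.Perm (Fin (2 * k)) ≃* Equiv.Perm (Fin (2 * k)))
          (θ₂ : Equiv.Perm (Fin (2 * k + 1)) ≃* Equiv.Perm (Fin (2 * k + 1))),
        (∀ (j : ℕ) (hj : j + 1 < 2 * k),
          θ₁ (Equiv.swap (⟨j, by omega⟩ : Fin (2 * k)) (⟨j + 1, hj⟩ : Fin (2 * k))) =
            Equiv.swap (⟨2 * k - 2 - j, by omega⟩ : Fin (2 * k))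
              (⟨2 * k - 1 - j, by omega⟩ : Fin (2 * k))) →
        (∀ (j : ℕ) (hj : j + 1 < 2 * k + 1),
          θ₂ (Equiv.swap (⟨j, by omega⟩ : Fin (2 * k + 1)) (⟨j + 1, hj⟩ : Fin (2 * k + 1))) =
            Equiv.swap (⟨2 * k - 1 - j, by omega⟩ : Fin (2 * k + 1))
              (⟨2 * k - j, by omega⟩ : Fin (2 * k + 1))) →
        ∀ σ, γ (θ₁ σ) = θ₂ (γ σ)) := by
  refine ⟨Perm.viaEmbeddingHom (Fin.succAboveEmb ⟨k, by omega⟩), Perm.viaEmbeddingHom_injective _,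
    ?_, ?_, ?_, ?_⟩
  · intro i h1 h2
    rw [Perm.viaEmbeddingHom_swap, Fin.coe_succAboveEmb,
      Fin.succAbove_mk_of_lt _ _ (by omega), Fin.succAbove_mk_of_lt _ _ (by omega)]
  · rw [Perm.viaEmbeddingHom_swap, Fin.coe_succAboveEmb, Fin.succAbove_mk_of_lt _ _ (by omega),
      Fin.succAbove_mk_of_le _ _ le_rfl,
      swap_comm (⟨k - 1, by omega⟩ : Fin (2 * k + 1)) ⟨k, by omega⟩,
      swap_comm (⟨k, by omega⟩ : Fin (2 * k + 1)) ⟨k + 1, by omega⟩]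
    exact (swap_mul_swap_mul_swap (by simp) (by simp; omega)).symm
  · intro i h1 h2
    rw [Perm.viaEmbeddingHom_swap, Fin.coe_succAboveEmb,
      Fin.succAbove_mk_of_le _ _ (by omega), Fin.succAbove_mk_of_le _ _ (by omega)]
    congr 2
    omega
  · intro θ₁ θ₂ hθ₁ hθ₂ σ
    -- `hθ₂` has the shape `m - 2 - j`, `m - 1 - j` for `m = 2k+1` up to defeq
    rw [Fin.eq_conj_revPerm_of_adjacent_swap θ₁ hθ₁, Fin.eq_conj_revPerm_of_adjacent_swap θ₂ hθ₂,
      map_mul, map_mul, map_inv, Perm.viaEmbeddingHom_apply,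
      Fin.revPerm_viaEmbedding_succAboveEmb (Fin.ext (by simp; omega))]
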